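/- For any integer n ≥ 3 and reals 0 < A < B, the integral ∫_A^B F_n(u)/u du is at most (n/π)·tan(π/n)·log(B/A) + O(1), where F_n(u) := cos(2π{u}/n) + tan(π/n)·sin(2π{u}/n), with the implied constant absolute. -/

import Mathlib

open Real

noncomputable def Fn (n : ℕ) (u : ℝ) : ℝ :=
  Real.cos (2 * π * Int.fract u / n) + Real.tan (π / n) * Real.sin (2 * π * Int.fract u / n)

section aux

variable {n : ℕ} (hn : 3 ≤ n)

lemma x_pos (hn : 3 ≤ n) : 0 < π / n := by
  apply div_pos Real.pi_pos
  exact_mod_cast (by omega : 0 < n)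

lemma x_le (hn : 3 ≤ n) : π / n ≤ π / 3 := by
  apply div_le_div_of_nonneg_left Real.pi_pos.le (by norm_num)
  exact_mod_cast hn

lemma cos_x_ge (hn : 3 ≤ n) : (1:ℝ)/2 ≤ Real.cos (π / n) := by
  have := Real.cos_pi_div_three
  calc (1:ℝ)/2 = Real.cos (π/3) := by rw [Real.cos_pi_div_three]
    _ ≤ Real.cos (π/n) := by
        apply Real.cos_le_cos_of_nonneg_of_le_pi (x_pos hn).le
        · linarith [Real.pi_pos]
        · exact x_le hn

lemma cos_x_pos (hn : 3 ≤ n) : 0 < Real.cos (π / n) := lt_of_lt_of_le (by norm_num) (cos_x_ge hn)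

lemma fn_eq (hn : 3 ≤ n) (u : ℝ) :
    Fn n u = Real.cos (2 * (π/n) * Int.fract u - π/n) / Real.cos (π/n) := by
  have hc := (cos_x_pos hn).ne'
  rw [Real.cos_sub, Fn, Real.tan_eq_sin_div_cos]
  have : 2 * π * Int.fract u / n = 2 * (π/n) * Int.fract u := by ring
  rw [this]
  field_simp

lemma fn_ge_one (hn : 3 ≤ n) (u : ℝ) : 1 ≤ Fn n u := by
  rw [fn_eq hn]
  rw [le_div_iff₀ (cos_x_pos hn), one_mul]
  have hf0 := Int.fract_nonneg u
  have hf1 := Int.fract_lt_one u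
  set x := π/n with hx
  have hxpos := x_pos hn
  have hxle := x_le hn
  rw [← Real.cos_abs (2 * x * Int.fract u - x)]
  apply Real.cos_le_cos_of_nonneg_of_le_pi (abs_nonneg _)
  · linarith [Real.pi_pos]
  · rw [abs_le]
    constructor <;> nlinarith [hxpos, hf0, hf1]

lemma fn_le_two (hn : 3 ≤ n) (u : ℝ) : Fn n u ≤ 2 := by
  rw [fn_eq hn]
  rw [div_le_iff₀ (cos_x_pos hn)]
  have := cos_x_ge hn
  have := Real.cos_le_one (2 * (π/n) * Int.fract u - π/n)
  linarith

lemma M_ge_one (hn : 3 ≤ n) : 1 ≤ Real.tan (π/n) / (π/n) := by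
  rw [le_div_iff₀ (x_pos hn), one_mul]
  have h2 : π/n < π/2 := lt_of_le_of_lt (x_le hn) (by linarith [Real.pi_pos])
  exact (Real.lt_tan (x_pos hn) h2).le

lemma M_le_two (hn : 3 ≤ n) : Real.tan (π/n) / (π/n) ≤ 2 := by
  rw [div_le_iff₀ (x_pos hn), Real.tan_eq_sin_div_cos, div_le_iff₀ (cos_x_pos hn)]
  have h1 : Real.sin (π/n) ≤ π/n := Real.sin_le (x_pos hn).le
  have h2 := cos_x_ge hn
  nlinarith [x_pos hn]

lemma fn_measurable (n : ℕ) : Measurable (Fn n) := by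
  apply Measurable.add
  · exact (Real.continuous_cos.measurable).comp ((measurable_fract.const_mul _).div_const _)
  · exact ((Real.continuous_sin.measurable).comp ((measurable_fract.const_mul _).div_const _)).const_mul _

lemma fn_periodic (n : ℕ) : Function.Periodic (Fn n) 1 := by
  intro u; unfold Fn; rw [Int.fract_add_one]

lemma fn_intervalIntegrable (hn : 3 ≤ n) (a b : ℝ) :
    IntervalIntegrable (Fn n) MeasureTheory.volume a b := by
  rw [intervalIntegrable_iff]
  apply MeasureTheory.Measure.integrableOn_of_bounded (M := 2)
  · exact (measure_Ioc_lt_top).ne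
  · exact ((fn_measurable n).aestronglyMeasurable)
  · filter_upwards with u
    rw [Real.norm_eq_abs, abs_le]
    exact ⟨by linarith [fn_ge_one hn u], fn_le_two hn u⟩

lemma fn_mean (hn : 3 ≤ n) : ∫ u in (0:ℝ)..1, Fn n u = Real.tan (π/n) / (π/n) := by
  have hnpos : (0:ℝ) < n := by exact_mod_cast (by omega : 0 < n)
  set c : ℝ := 2 * π / n with hc
  have hcpos : 0 < c := by positivity
  have hcongr : ∫ u in (0:ℝ)..1, Fn n u
      = ∫ u in (0:ℝ)..1, (Real.cos (c*u) + Real.tan (π/n) * Real.sin (c*u)) := by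
    apply intervalIntegral.integral_congr_ae
    have h1 : ∀ᵐ x : ℝ, x ≠ (1:ℝ) := by
      rw [MeasureTheory.ae_iff]
      simpa using Real.volume_singleton (x := 1)
    filter_upwards [h1] with u hu hmem
    rw [Set.uIoc_of_le (by norm_num : (0:ℝ) ≤ 1)] at hmem
    have hfr : Int.fract u = u := Int.fract_eq_self.mpr ⟨hmem.1.le, lt_of_le_of_ne hmem.2 hu⟩
    unfold Fn
    rw [hfr]
    rw [hc]
    ring_nf
  rw [hcongr]
  have hint1 : IntervalIntegrable (fun u => Real.cos (c*u)) MeasureTheory.volume 0 1 :=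
    (Real.continuous_cos.comp (continuous_const.mul continuous_id)).intervalIntegrable 0 1
  have hint2 : IntervalIntegrable (fun u => Real.tan (π/n) * Real.sin (c*u)) MeasureTheory.volume 0 1 :=
    (continuous_const.mul (Real.continuous_sin.comp (continuous_const.mul continuous_id))).intervalIntegrable 0 1
  rw [intervalIntegral.integral_add hint1 hint2, intervalIntegral.integral_const_mul]
  rw [intervalIntegral.integral_comp_mul_left (fun x => Real.cos x) hcpos.ne',
      intervalIntegral.integral_comp_mul_left (fun x => Real.sin x) hcpos.ne']
  rw [integral_cos, integral_sin]
  simp only [mul_zero, mul_one, Real.sin_zero, Real.cos_zero, smul_eq_mul]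
  -- now: c⁻¹ * (sin c - 0) + tan(π/n) * (c⁻¹ * (1 - cos c)) = tan(π/n)/(π/n)
  have hx : c = 2 * (π/n) := by rw [hc]; ring
  have hcosne := (cos_x_pos hn).ne'
  have hxpos := x_pos hn
  rw [hx, Real.sin_two_mul, Real.cos_two_mul, Real.tan_eq_sin_div_cos]
  have hs := Real.sin_sq_add_cos_sq (π/n)
  field_simp
  nlinarith [hs]

lemma fn_int_period (hn : 3 ≤ n) (t : ℝ) :
    ∫ u in t..(t+1), Fn n u = Real.tan (π/n) / (π/n) := by
  rw [(fn_periodic n).intervalIntegral_add_eq t 0]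
  simpa using fn_mean hn

lemma fn_div_intInt (hn : 3 ≤ n) {a b : ℝ} (ha : 0 < a) (hab : a ≤ b) :
    IntervalIntegrable (fun u => Fn n u / u) MeasureTheory.volume a b := by
  rw [intervalIntegrable_iff, Set.uIoc_of_le hab]
  apply MeasureTheory.Measure.integrableOn_of_bounded (M := 2/a)
  · exact (measure_Ioc_lt_top).ne
  · exact ((fn_measurable n).div measurable_id).aestronglyMeasurable
  · filter_upwards [MeasureTheory.ae_restrict_mem measurableSet_Ioc] with u hu
    have hu0 : 0 < u := lt_of_lt_of_le ha hu.1.le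
    have hF1 := fn_ge_one hn u
    have hF2 := fn_le_two hn u
    rw [Real.norm_eq_abs, abs_of_nonneg (div_nonneg (by linarith) hu0.le)]
    exact div_le_div₀ (by norm_num) hF2 ha hu.1.le

lemma period_bound (hn : 3 ≤ n) {k : ℝ} (hk : 1 ≤ k) :
    ∫ u in k..(k+1), Fn n u / u ≤
      (Real.tan (π/n) / (π/n)) * (Real.log (k+1) - Real.log k) + (1/k - 1/(k+1)) := by
  set M := Real.tan (π/n) / (π/n) with hM
  have hM1 : 1 ≤ M := M_ge_one hn
  have hM2 : M ≤ 2 := M_le_two hn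
  have hk0 : 0 < k := by linarith
  have hk10 : 0 < k + 1 := by linarith
  -- pointwise bound
  have hpt : ∀ u ∈ Set.Icc k (k+1),
      Fn n u / u ≤ M * u⁻¹ + ((k+1)⁻¹ * Fn n u + (1/k - 1/(k+1) - M/(k+1))) := by
    intro u hu
    have hu0 : 0 < u := lt_of_lt_of_le hk0 hu.1
    have hF1 := fn_ge_one hn u
    have hF2 := fn_le_two hn u
    have e1 : Fn n u / u - M * u⁻¹ - (Fn n u - M)/(k+1)
        = (Fn n u - M) * (1/u - 1/(k+1)) := by
      field_simp
    have h2 : 0 ≤ 1/u - 1/(k+1) := by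
      have := one_div_le_one_div_of_le hu0 hu.2
      linarith
    have h3 : 1/u - 1/(k+1) ≤ 1/k - 1/(k+1) := by
      have := one_div_le_one_div_of_le hk0 hu.1
      linarith
    have h4 : (Fn n u - M) * (1/u - 1/(k+1)) ≤ 1 * (1/k - 1/(k+1)) :=
      mul_le_mul (by linarith) h3 h2 (by norm_num)
    have h5 : (Fn n u - M)/(k+1) = (k+1)⁻¹ * Fn n u - M/(k+1) := by
      field_simp
    nlinarith [h4, e1]
  -- integrability of rhs pieces
  have hI1 : IntervalIntegrable (fun u => M * u⁻¹) MeasureTheory.volume k (k+1) := by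
    apply ContinuousOn.intervalIntegrable
    apply ContinuousOn.mul continuousOn_const
    apply ContinuousOn.inv₀ continuousOn_id
    intro u hu
    rw [Set.uIcc_of_le (by linarith)] at hu
    exact ne_of_gt (lt_of_lt_of_le hk0 hu.1)
  have hI3 : IntervalIntegrable (fun u => (k+1)⁻¹ * Fn n u) MeasureTheory.volume k (k+1) :=
    (fn_intervalIntegrable hn k (k+1)).const_mul _
  have hI4 : IntervalIntegrable (fun _ : ℝ => (1/k - 1/(k+1) - M/(k+1))) MeasureTheory.volume k (k+1) :=
    intervalIntegrable_const
  have hmono := intervalIntegral.integral_mono_on (by linarith : k ≤ k+1)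
    (fn_div_intInt hn hk0 (by linarith)) (hI1.add (hI3.add hI4)) hpt
  refine le_trans hmono ?_
  rw [intervalIntegral.integral_add hI1 (hI3.add hI4),
      intervalIntegral.integral_add hI3 hI4,
      intervalIntegral.integral_const_mul, intervalIntegral.integral_const_mul,
      intervalIntegral.integral_const, integral_inv_of_pos hk0 hk10,
      fn_int_period hn, ← hM]
  rw [Real.log_div (ne_of_gt hk10) (ne_of_gt hk0)]
  have : (k + 1 - k) = 1 := by ring
  rw [this]
  simp only [smul_eq_mul, one_mul]
  exact le_of_eq (by ring)

lemma tail_bound (hn : 3 ≤ n) : ∀ (m : ℕ) (A : ℝ), 1 ≤ A →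
    ∫ u in A..(A+m), Fn n u / u ≤
      (Real.tan (π/n) / (π/n)) * (Real.log (A+m) - Real.log A) + (1/A - 1/(A+m)) := by
  intro m
  induction m with
  | zero => intro A hA; simp
  | succ m ih =>
    intro A hA
    have hA0 : 0 < A := by linarith
    have hm0 : (0:ℝ) ≤ m := (Nat.cast_nonneg m : (0:ℝ) ≤ m)
    have hsplit : ∫ u in A..(A+(m:ℝ)+1), Fn n u / u
        = (∫ u in A..(A+(m:ℝ)), Fn n u / u) + ∫ u in (A+(m:ℝ))..(A+(m:ℝ)+1), Fn n u / u := by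
      rw [intervalIntegral.integral_add_adjacent_intervals
        (fn_div_intInt hn hA0 (by linarith))
        (fn_div_intInt hn (by linarith) (by linarith))]
    have h1 := ih A hA
    have h2 := period_bound hn (k := A + m) (by linarith)
    push_cast
    have e : A + ((m:ℝ)+1) = A + (m:ℝ) + 1 := by ring
    rw [e, hsplit]
    linarith [h1, h2]

lemma tan_le_two_x (hn : 3 ≤ n) : Real.tan (π/n) ≤ 2*(π/n) := by
  rw [Real.tan_eq_sin_div_cos, div_le_iff₀ (cos_x_pos hn)]
  have h1 : Real.sin (π/n) ≤ π/n := Real.sin_le (x_pos hn).le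
  have h2 := cos_x_ge hn
  have h3 := x_pos hn
  nlinarith

lemma head_bound (hn : 3 ≤ n) {A B : ℝ} (hA : 0 < A) (hAB : A ≤ B) (hB : B ≤ 1) :
    ∫ u in A..B, Fn n u / u ≤
      (Real.tan (π/n) / (π/n)) * (Real.log B - Real.log A) + 5 := by
  set M := Real.tan (π/n) / (π/n) with hM
  have hM1 : 1 ≤ M := M_ge_one hn
  have hB0 : 0 < B := lt_of_lt_of_le hA hAB
  have hx := x_pos hn
  have hxle : π/n ≤ 1.05 := by
    have := x_le hn
    have := Real.pi_lt_d2
    linarith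
  have htan := tan_le_two_x hn
  have htan0 : 0 ≤ Real.tan (π/n) := by linarith [Real.lt_tan hx (lt_of_le_of_lt (x_le hn) (by linarith [Real.pi_gt_three]))]
  have hpt : ∀ u ∈ Set.Icc A B, Fn n u / u ≤ M * u⁻¹ + 5 := by
    intro u hu
    have hu0 : 0 < u := lt_of_lt_of_le hA hu.1
    have hu1 : u ≤ 1 := le_trans hu.2 hB
    have key : Fn n u ≤ M + 5 * u := by
      rcases lt_or_eq_of_le hu1 with h | h
      · have hfr : Int.fract u = u := Int.fract_eq_self.mpr ⟨hu0.le, h⟩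
        unfold Fn
        rw [hfr]
        have harg : 0 ≤ 2 * π * u / n := by positivity
        have hsin : Real.sin (2 * π * u / n) ≤ 2 * π * u / n := Real.sin_le harg
        have hsin2 : Real.tan (π/n) * Real.sin (2 * π * u / n) ≤ Real.tan (π/n) * (2 * π * u / n) := by
          apply mul_le_mul_of_nonneg_left hsin htan0
        have hcos : Real.cos (2 * π * u / n) ≤ 1 := Real.cos_le_one _
        have heq : 2 * π * u / n = 2 * (π/n) * u := by ring
        have h4 : Real.tan (π/n) * (2 * π * u / n) ≤ 2*(π/n) * (2 * (π/n) * u) := by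
          rw [heq]
          apply mul_le_mul_of_nonneg_right htan (by positivity)
        have h5 : 2*(π/n) * (2 * (π/n) * u) ≤ 5 * u := by nlinarith
        linarith
      · subst h
        have : Fn n 1 = 1 := by
          unfold Fn
          norm_num
        rw [this]
        linarith
    rw [div_le_iff₀ hu0]
    have : (M * u⁻¹ + 5) * u = M + 5 * u := by field_simp
    rw [this]
    exact key
  have hI1 : IntervalIntegrable (fun u => M * u⁻¹) MeasureTheory.volume A B := by
    apply ContinuousOn.intervalIntegrable
    apply ContinuousOn.mul continuousOn_const
    apply ContinuousOn.inv₀ continuousOn_id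
    intro u hu
    rw [Set.uIcc_of_le hAB] at hu
    exact ne_of_gt (lt_of_lt_of_le hA hu.1)
  have hI2 : IntervalIntegrable (fun _ : ℝ => (5:ℝ)) MeasureTheory.volume A B :=
    intervalIntegrable_const
  have hmono := intervalIntegral.integral_mono_on hAB
    (fn_div_intInt hn hA hAB) (hI1.add hI2) hpt
  refine le_trans hmono ?_
  rw [intervalIntegral.integral_add hI1 hI2,
      intervalIntegral.integral_const_mul, intervalIntegral.integral_const,
      integral_inv_of_pos hA hB0, Real.log_div (ne_of_gt hB0) (ne_of_gt hA)]
  simp only [smul_eq_mul]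
  nlinarith [hM1]

lemma tail_final (hn : 3 ≤ n) {A B : ℝ} (hA : 1 ≤ A) (hAB : A < B) :
    ∫ u in A..B, Fn n u / u ≤
      (Real.tan (π/n) / (π/n)) * (Real.log B - Real.log A) + 3 := by
  set M := Real.tan (π/n) / (π/n) with hM
  have hM1 : 1 ≤ M := M_ge_one hn
  have hA0 : 0 < A := by linarith
  set m : ℕ := ⌊B - A⌋₊ with hm
  have hm1 : (m:ℝ) ≤ B - A := Nat.floor_le (by linarith)
  have hm2 : B - A < m + 1 := Nat.lt_floor_add_one _
  have hsplit : ∫ u in A..B, Fn n u / u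
      = (∫ u in A..(A+(m:ℝ)), Fn n u / u) + ∫ u in (A+(m:ℝ))..B, Fn n u / u := by
    rw [intervalIntegral.integral_add_adjacent_intervals
      (fn_div_intInt hn hA0 (by linarith [(Nat.cast_nonneg m : (0:ℝ) ≤ m)]))
      (fn_div_intInt hn (by linarith [(Nat.cast_nonneg m : (0:ℝ) ≤ m)]) (by linarith))]
  have h1 := tail_bound hn m A hA
  have h2 : ∫ u in (A+(m:ℝ))..B, Fn n u / u ≤ 2 * (B - (A + m)) := by
    have hpt : ∀ u ∈ Set.Icc (A+(m:ℝ)) B, Fn n u / u ≤ 2 := by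
      intro u hu
      have hu1 : 1 ≤ u := by linarith [hu.1, (Nat.cast_nonneg m : (0:ℝ) ≤ m)]
      rw [div_le_iff₀ (by linarith)]
      nlinarith [fn_le_two hn u, fn_ge_one hn u]
    have := intervalIntegral.integral_mono_on (by linarith : A+(m:ℝ) ≤ B)
      (fn_div_intInt hn (by linarith [(Nat.cast_nonneg m : (0:ℝ) ≤ m)]) (by linarith))
      intervalIntegrable_const hpt
    rw [intervalIntegral.integral_const, smul_eq_mul] at this
    linarith
  have hlog : Real.log (A + m) ≤ Real.log B :=
    Real.log_le_log (by positivity) (by linarith)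
  have hlog2 : M * Real.log (A+m) ≤ M * Real.log B :=
    mul_le_mul_of_nonneg_left hlog (by linarith)
  have h3 : 1/A ≤ 1 := by
    rw [div_le_one hA0]; exact hA
  have h4 : 0 < 1/(A + (m:ℝ)) := by
    have := (Nat.cast_nonneg m : (0:ℝ) ≤ m)
    positivity
  rw [hsplit]
  rw [← hM] at h1
  linarith

end aux

/-- For `n ≥ 3` and `0 < A < B`, `∫_A^B F_n(u)/u du ≤ (n/π)·tan(π/n)·log(B/A) + O(1)`,
with an absolute implied constant. -/
theorem stmt_2 :
    ∃ C : ℝ, 0 < C ∧ ∀ n : ℕ, 3 ≤ n → ∀ A B : ℝ, 0 < A → A < B →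
      (∫ u in A..B, Fn n u / u) ≤ (n / π) * Real.tan (π / n) * Real.log (B / A) + C := by
  refine ⟨10, by norm_num, ?_⟩
  intro n hn A B hA hAB
  have hB0 : 0 < B := lt_trans hA hAB
  have hn0 : (n:ℝ) ≠ 0 := by
    have : (0:ℝ) < n := by exact_mod_cast (by omega : 0 < n)
    exact this.ne'
  have hMrw : (n / π) * Real.tan (π / n) = Real.tan (π/n) / (π/n) := by
    field_simp
  rw [hMrw, Real.log_div (ne_of_gt hB0) (ne_of_gt hA)]
  rcases le_or_gt B 1 with hB | hB
  · have := head_bound hn hA hAB.le hB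
    linarith
  · rcases le_or_gt 1 A with hA1 | hA1
    · have := tail_final hn hA1 hAB
      linarith
    · have hsplit : ∫ u in A..B, Fn n u / u
          = (∫ u in A..(1:ℝ), Fn n u / u) + ∫ u in (1:ℝ)..B, Fn n u / u := by
        rw [intervalIntegral.integral_add_adjacent_intervals
          (fn_div_intInt hn hA hA1.le)
          (fn_div_intInt hn one_pos hB.le)]
      have h1 := head_bound hn hA hA1.le le_rfl
      have h2 := tail_final hn le_rfl hB
      rw [hsplit]
      simp only [Real.log_one] at h1 h2
      linarith
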